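/- Let η(z) = η_0 (1 + λ z)^{(p-2)/2} with η_0 > 0, λ > 0 and p ∈ (1,2) (the Carreau law with η_∞ = 0). Then there exists a constant C_3 > 0 such that for all symmetric matrices K, L: |η(|K|²)K − η(|L|²)L| ≤ C_3 |K − L|^{p-1}. -/

import Mathlib

noncomputable def frob {n : ℕ} (B : Matrix (Fin n) (Fin n) ℝ) : ℝ :=
  Real.sqrt (∑ i, ∑ j, (B i j) ^ 2)

/-!
Write `q = (p - 2)/2 ∈ (-1/2, 0)`, `a = ‖K‖ ≥ b = ‖L‖`, `d = ‖K - L‖` and `φ(t) = η₀ (1 + λt²)^q`.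
Then `φ(a) K - φ(b) L = φ(a) (K - L) - (φ(b) - φ(a)) L`, and both pieces are compared with the
pure power law `η₀ λ^q t^(p-2)`, which dominates `φ` and, because `u ↦ u^q - (1 + u)^q` is
antitone, also dominates its decrements. The first piece is then at most
`η₀ λ^q a^(p-2) d ≤ η₀ λ^q 2^(2-p) d^(p-1)` since `d ≤ 2a`, and the second at most
`η₀ λ^q (b^(p-2) - a^(p-2)) b ≤ η₀ λ^q (a - b)^(p-1) ≤ η₀ λ^q d^(p-1)`.
Only the norm enters, so the estimate holds in any real normed space, not just for the
Frobenius norm on symmetric `2 × 2` matrices.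
-/

open Real Set

theorem antitoneOn_rpow_sub_one_add_rpow {q : ℝ} (hq : q ≤ 0) :
    AntitoneOn (fun u : ℝ => u ^ q - (1 + u) ^ q) (Ioi 0) := by
  have hderiv : ∀ u ∈ Ioi (0 : ℝ), HasDerivAt (fun u : ℝ => u ^ q - (1 + u) ^ q)
      (q * u ^ (q - 1) - 1 * q * (1 + u) ^ (q - 1)) u := fun u hu =>
    (hasDerivAt_rpow_const (Or.inl (ne_of_gt hu))).sub
      (((hasDerivAt_id u).const_add 1).rpow_const (Or.inl (by simp at hu ⊢; positivity)))
  refine antitoneOn_of_hasDerivWithinAt_nonpos (convex_Ioi 0)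
    (fun u hu => (hderiv u hu).continuousAt.continuousWithinAt)
    (fun u hu => (hderiv u (interior_subset hu)).hasDerivWithinAt) fun u hu => ?_
  rw [interior_Ioi] at hu
  have : (1 + u) ^ (q - 1) ≤ u ^ (q - 1) :=
    rpow_le_rpow_of_nonpos hu (by linarith) (by linarith)
  nlinarith

theorem one_add_rpow_sub_one_add_rpow_le {q s t : ℝ} (hq : q ≤ 0) (hs : 0 < s) (hst : s ≤ t) :
    (1 + s) ^ q - (1 + t) ^ q ≤ s ^ q - t ^ q := by
  have := antitoneOn_rpow_sub_one_add_rpow hq hs (hs.trans_le hst) hst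
  simp only at this
  linarith

theorem mul_sq_rpow_half {lam a s : ℝ} (hlam : 0 ≤ lam) (ha : 0 ≤ a) :
    (lam * a ^ 2) ^ (s / 2) = lam ^ (s / 2) * a ^ s := by
  rw [mul_rpow hlam (by positivity), ← rpow_natCast_mul ha]
  ring_nf

theorem rpow_sub_rpow_mul_le {p a b : ℝ} (hp1 : 1 ≤ p) (hp2 : p ≤ 2) (hb : 0 ≤ b) (hba : b ≤ a) :
    (b ^ (p - 2) - a ^ (p - 2)) * b ≤ (a - b) ^ (p - 1) := by
  rcases hb.eq_or_lt with rfl | hb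
  · simpa using rpow_nonneg (by linarith) _
  rcases hba.eq_or_lt with rfl | hba
  · simpa using rpow_nonneg le_rfl _
  have hab : 0 < a - b := by linarith
  have hpow : ∀ x : ℝ, 0 < x → x ^ (p - 2) * x = x ^ (p - 1) := fun x hx => by
    rw [← rpow_add_one hx.ne']; ring_nf
  -- `a^(p-2) b = a^(p-1) - a^(p-2) (a-b) ≥ a^(p-1) - (a-b)^(p-1)`
  have h1 : b ^ (p - 1) ≤ a ^ (p - 1) := rpow_le_rpow hb.le hba.le (by linarith)
  have h2 : a ^ (p - 2) * (a - b) ≤ (a - b) ^ (p - 2) * (a - b) :=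
    mul_le_mul_of_nonneg_right (rpow_le_rpow_of_nonpos hab (by linarith) (by linarith)) hab.le
  nlinarith [hpow a (hb.trans hba), hpow b hb, hpow (a - b) hab]

theorem one_add_mul_sq_rpow_mul_le {p lam a d : ℝ} (hp : p ≤ 2) (hlam : 0 < lam) (hd : 0 ≤ d)
    (hda : d ≤ 2 * a) :
    (1 + lam * a ^ 2) ^ ((p - 2) / 2) * d ≤ lam ^ ((p - 2) / 2) * 2 ^ (2 - p) * d ^ (p - 1) := by
  rcases hd.eq_or_lt with rfl | hd
  · simp only [mul_zero]; positivity
  have ha : 0 < a := by linarith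
  calc (1 + lam * a ^ 2) ^ ((p - 2) / 2) * d
      ≤ (lam * a ^ 2) ^ ((p - 2) / 2) * d :=
        mul_le_mul_of_nonneg_right
          (rpow_le_rpow_of_nonpos (by positivity) (by linarith) (by linarith)) hd.le
    _ = lam ^ ((p - 2) / 2) * a ^ (p - 2) * d := by rw [mul_sq_rpow_half hlam.le ha.le]
    _ ≤ lam ^ ((p - 2) / 2) * (d / 2) ^ (p - 2) * d := by
        gcongr _ * ?_ * _
        exact rpow_le_rpow_of_nonpos (by positivity) (by linarith) (by linarith)
    _ = lam ^ ((p - 2) / 2) * 2 ^ (2 - p) * d ^ (p - 1) := by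
        rw [div_rpow hd.le zero_le_two, div_eq_mul_inv _ ((2 : ℝ) ^ (p - 2)), ← rpow_neg zero_le_two, neg_sub,
          show p - 1 = p - 2 + 1 by ring, rpow_add_one hd.ne']
        ring

theorem one_add_mul_sq_rpow_sub_mul_le {p lam a b : ℝ} (hp1 : 1 ≤ p) (hp2 : p ≤ 2) (hlam : 0 < lam)
    (hb : 0 ≤ b) (hba : b ≤ a) :
    ((1 + lam * b ^ 2) ^ ((p - 2) / 2) - (1 + lam * a ^ 2) ^ ((p - 2) / 2)) * b ≤
      lam ^ ((p - 2) / 2) * (a - b) ^ (p - 1) := by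
  rcases hb.eq_or_lt with rfl | hb
  · simp only [mul_zero]; positivity
  have hshift := one_add_rpow_sub_one_add_rpow_le (q := (p - 2) / 2) (t := lam * a ^ 2) (by linarith)
    (by positivity : 0 < lam * b ^ 2) (by gcongr)
  rw [mul_sq_rpow_half hlam.le hb.le, mul_sq_rpow_half hlam.le (hb.le.trans hba)] at hshift
  calc _ ≤ lam ^ ((p - 2) / 2) * (b ^ (p - 2) - a ^ (p - 2)) * b := by
        gcongr; linarith
    _ ≤ lam ^ ((p - 2) / 2) * (a - b) ^ (p - 1) := by
        rw [mul_assoc]; gcongr; exact rpow_sub_rpow_mul_le hp1 hp2 hb.le hba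

theorem norm_smul_sub_smul_le {F : Type*} [SeminormedAddCommGroup F] [NormedSpace ℝ F]
    {α β : ℝ} (hα : 0 ≤ α) (hαβ : α ≤ β) (k l : F) :
    ‖α • k - β • l‖ ≤ α * ‖k - l‖ + (β - α) * ‖l‖ := by
  calc ‖α • k - β • l‖ = ‖α • (k - l) - (β - α) • l‖ := by congr 1; module
    _ ≤ ‖α • (k - l)‖ + ‖(β - α) • l‖ := norm_sub_le _ _
    _ = α * ‖k - l‖ + (β - α) * ‖l‖ := by
        rw [norm_smul, norm_smul, Real.norm_of_nonneg hα, Real.norm_of_nonneg (by linarith)]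

section CarreauStress

variable {F : Type*} [SeminormedAddCommGroup F] [NormedSpace ℝ F]

noncomputable def carreauStress (η₀ lam p : ℝ) (x : F) : F :=
  (η₀ * (1 + lam * ‖x‖ ^ 2) ^ ((p - 2) / 2)) • x

theorem norm_carreauStress_sub_le_of_norm_le {η₀ lam p : ℝ} (hp1 : 1 ≤ p) (hp2 : p ≤ 2)
    (hη₀ : 0 ≤ η₀) (hlam : 0 < lam) {k l : F} (hlk : ‖l‖ ≤ ‖k‖) :
    ‖carreauStress η₀ lam p k - carreauStress η₀ lam p l‖ ≤
      η₀ * lam ^ ((p - 2) / 2) * (2 ^ (2 - p) + 1) * ‖k - l‖ ^ (p - 1) := by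
  have hvisc : (1 + lam * ‖k‖ ^ 2) ^ ((p - 2) / 2) ≤ (1 + lam * ‖l‖ ^ 2) ^ ((p - 2) / 2) :=
    rpow_le_rpow_of_nonpos (by positivity) (by gcongr) (by linarith)
  have hdist : ‖k - l‖ ≤ 2 * ‖k‖ := by linarith [norm_sub_le k l]
  have hgap : (‖k‖ - ‖l‖) ^ (p - 1) ≤ ‖k - l‖ ^ (p - 1) :=
    rpow_le_rpow (by linarith) (norm_sub_norm_le k l) (by linarith)
  calc _ ≤ η₀ * (1 + lam * ‖k‖ ^ 2) ^ ((p - 2) / 2) * ‖k - l‖ +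
        (η₀ * (1 + lam * ‖l‖ ^ 2) ^ ((p - 2) / 2) - η₀ * (1 + lam * ‖k‖ ^ 2) ^ ((p - 2) / 2)) *
          ‖l‖ :=
        norm_smul_sub_smul_le (by positivity) (by gcongr) k l
    _ = η₀ * ((1 + lam * ‖k‖ ^ 2) ^ ((p - 2) / 2) * ‖k - l‖) +
        η₀ * (((1 + lam * ‖l‖ ^ 2) ^ ((p - 2) / 2) - (1 + lam * ‖k‖ ^ 2) ^ ((p - 2) / 2)) *
          ‖l‖) := by ring
    _ ≤ η₀ * (lam ^ ((p - 2) / 2) * 2 ^ (2 - p) * ‖k - l‖ ^ (p - 1)) +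
        η₀ * (lam ^ ((p - 2) / 2) * ‖k - l‖ ^ (p - 1)) := by
        gcongr η₀ * ?_ + η₀ * ?_
        · exact one_add_mul_sq_rpow_mul_le hp2 hlam (norm_nonneg _) hdist
        · exact (one_add_mul_sq_rpow_sub_mul_le hp1 hp2 hlam (norm_nonneg _) hlk).trans
            (mul_le_mul_of_nonneg_left hgap (by positivity))
    _ = η₀ * lam ^ ((p - 2) / 2) * (2 ^ (2 - p) + 1) * ‖k - l‖ ^ (p - 1) := by ring

theorem norm_carreauStress_sub_le {η₀ lam p : ℝ} (hp1 : 1 ≤ p) (hp2 : p ≤ 2)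
    (hη₀ : 0 ≤ η₀) (hlam : 0 < lam) (k l : F) :
    ‖carreauStress η₀ lam p k - carreauStress η₀ lam p l‖ ≤
      η₀ * lam ^ ((p - 2) / 2) * (2 ^ (2 - p) + 1) * ‖k - l‖ ^ (p - 1) := by
  rcases le_total ‖l‖ ‖k‖ with hlk | hkl
  · exact norm_carreauStress_sub_le_of_norm_le hp1 hp2 hη₀ hlam hlk
  · rw [norm_sub_rev, norm_sub_rev k]
    exact norm_carreauStress_sub_le_of_norm_le hp1 hp2 hη₀ hlam hkl

end CarreauStress

attribute [local instance] Matrix.frobeniusNormedAddCommGroup Matrix.frobeniusNormedSpace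

theorem frob_eq_norm {n : ℕ} (B : Matrix (Fin n) (Fin n) ℝ) : frob B = ‖B‖ := by
  simp [frob, Matrix.frobenius_norm_def, Real.sqrt_eq_rpow]

/-- Hölder continuity of exponent `p − 1` of the degenerate (`η_∞ = 0`) Carreau stress map. -/
theorem carreau_holder (p η₀ lam : ℝ) (hp1 : 1 < p) (hp2 : p < 2)
    (hη₀ : 0 < η₀) (hlam : 0 < lam)
    (η : ℝ → ℝ) (hηdef : ∀ z, η z = η₀ * (1 + lam * z) ^ ((p - 2) / 2)) :
    ∃ C₃ > 0, ∀ K L : Matrix (Fin 2) (Fin 2) ℝ, K.IsSymm → L.IsSymm →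
      frob (η (frob K ^ 2) • K - η (frob L ^ 2) • L) ≤ C₃ * (frob (K - L)) ^ (p - 1) := by
  refine ⟨η₀ * lam ^ ((p - 2) / 2) * (2 ^ (2 - p) + 1), by positivity, fun K L _ _ => ?_⟩
  simp only [frob_eq_norm, hηdef]
  exact norm_carreauStress_sub_le hp1.le hp2.le hη₀.le hlam K L
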